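/- arXiv:math/0106266 — 2 statements merged into one kernel-verified Lean document; each statement's English description precedes it below -/
import Mathlib

section
/- Staircase lemma: let $\{E^{i,j}, d', d''\}$ be a double cochain complex with commuting differentials $d'$ of bidegree $(1,0)$ and $d''$ of bidegree $(0,1)$, whose columns (the complexes with differential $d''$) are exact. Then every cohomology class of the total complex in total degree $n$ can be represented by a total $n$-cocycle concentrated in bidegree $(n-1,1)$. -/
/-!
STATEMENT 13 (Staircase lemma): let `{E^{i,j}, d', d''}` be a double cochain complex with
differentials `d'` of bidegree `(1,0)` and `d''` of bidegree `(0,1)` (anticommuting, so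
that the total differential `D = d' + d''` squares to zero), whose columns are exact (in
each position with `j ≥ 1`).  Then every cohomology class of the total complex in total
degree `n` can be represented by a total `n`-cocycle concentrated in bidegree `(n-1, 1)`.

A total `n`-cochain is a family `f i j ∈ E i j` supported on `i + j = n`, `i ≥ 0`,
`j ≥ 1`; the cocycle condition and the coboundary relation `f - h = D g` are written
componentwise.
-/

def trE {E : ℤ → ℤ → Type} {i j i' j' : ℤ} (hi : i = i') (hj : j = j') (x : E i j) :
    E i' j' := by subst hi; subst hj; exact x

theorem trE_self {E : ℤ → ℤ → Type} {i j : ℤ} (hi : i = i) (hj : j = j) (x : E i j) :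
    trE hi hj x = x := rfl

theorem trE_zero {E : ℤ → ℤ → Type} [∀ i j, AddCommGroup (E i j)] {i j i' j' : ℤ}
    (hi : i = i') (hj : j = j') : trE (E := E) hi hj 0 = 0 := by subst hi; subst hj; rfl

theorem trE_d' {k : Type} [Field k] {E : ℤ → ℤ → Type} [∀ i j, AddCommGroup (E i j)]
    [∀ i j, Module k (E i j)] (d' : ∀ i j, E i j →ₗ[k] E (i + 1) j)
    {i j i' j' : ℤ} (hi : i = i') (hj : j = j') (x : E i j) :
    d' i' j' (trE hi hj x) = trE (by rw [hi]) hj (d' i j x) := by subst hi; subst hj; rfl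

theorem trE_d'' {k : Type} [Field k] {E : ℤ → ℤ → Type} [∀ i j, AddCommGroup (E i j)]
    [∀ i j, Module k (E i j)] (d'' : ∀ i j, E i j →ₗ[k] E i (j + 1))
    {i j i' j' : ℤ} (hi : i = i') (hj : j = j') (x : E i j) :
    d'' i' j' (trE hi hj x) = trE hi (by rw [hj]) (d'' i j x) := by subst hi; subst hj; rfl


theorem staircase_lemma
    (k : Type) [Field k]
    (E : ℤ → ℤ → Type) [∀ i j, AddCommGroup (E i j)] [∀ i j, Module k (E i j)]
    (d' : ∀ i j, E i j →ₗ[k] E (i + 1) j) (d'' : ∀ i j, E i j →ₗ[k] E i (j + 1))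
    (hd'sq : ∀ i j (x : E i j), d' (i + 1) j (d' i j x) = 0)
    (hd''sq : ∀ i j (x : E i j), d'' i (j + 1) (d'' i j x) = 0)
    (hanti : ∀ i j (x : E i j), d' i (j + 1) (d'' i j x) = - d'' (i + 1) j (d' i j x))
    -- exactness of the columns in every position with `j ≥ 1` (and `i ≥ 0`):
    (hexact : ∀ i j, 0 ≤ i → 0 ≤ j → ∀ x : E i (j + 1),
      d'' i (j + 1) x = 0 → ∃ y : E i j, d'' i j y = x)
    (n : ℤ)
    -- `f` is a total `n`-cochain ...
    (f : ∀ i j, E i j)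
    (hsupp : ∀ i j, ¬(i + j = n ∧ 0 ≤ i ∧ 1 ≤ j) → f i j = 0)
    -- ... which is a total cocycle:
    (hcocycle : ∀ i j, d' i (j + 1) (f i (j + 1)) + d'' (i + 1) j (f (i + 1) j) = 0) :
    ∃ (h : ∀ i j, E i j) (g : ∀ i j, E i j),
      -- `h` is concentrated in bidegree `(n-1, 1)`:
      (∀ i j, ¬(i = n - 1 ∧ j = 1) → h i j = 0) ∧
      -- `h` is a total `n`-cocycle:
      (∀ i j, d' i (j + 1) (h i (j + 1)) + d'' (i + 1) j (h (i + 1) j) = 0) ∧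
      -- `g` is a total `(n-1)`-cochain:
      (∀ i j, ¬(i + j = n - 1 ∧ 0 ≤ i ∧ 0 ≤ j) → g i j = 0) ∧
      -- `f` and `h` are totally cohomologous: `f - h = (d' + d'') g`:
      (∀ i j, f (i + 1) (j + 1) - h (i + 1) (j + 1) =
        d' i (j + 1) (g i (j + 1)) + d'' (i + 1) j (g (i + 1) j)) := by
  have aux : ∀ m : ℕ, ∀ f : ∀ i j, E i j,
      (∀ i j, ¬(i + j = n ∧ 0 ≤ i ∧ 1 ≤ j) → f i j = 0) →
      (∀ i j, d' i (j + 1) (f i (j + 1)) + d'' (i + 1) j (f (i + 1) j) = 0) →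
      (∀ i j, i < n - 1 - (m : ℤ) → f i j = 0) →
      ∃ (h : ∀ i j, E i j) (g : ∀ i j, E i j),
      (∀ i j, ¬(i = n - 1 ∧ j = 1) → h i j = 0) ∧
      (∀ i j, d' i (j + 1) (h i (j + 1)) + d'' (i + 1) j (h (i + 1) j) = 0) ∧
      (∀ i j, ¬(i + j = n - 1 ∧ 0 ≤ i ∧ 0 ≤ j) → g i j = 0) ∧
      (∀ i j, f (i + 1) (j + 1) - h (i + 1) (j + 1) =
        d' i (j + 1) (g i (j + 1)) + d'' (i + 1) j (g (i + 1) j)) := by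
    intro m
    induction m with
    | zero =>
      intro f hsupp hcocycle hvanish
      refine ⟨f, fun _ _ => 0, ?_, hcocycle, fun _ _ _ => rfl, ?_⟩
      · intro i j hc
        by_cases hcond : i + j = n ∧ 0 ≤ i ∧ 1 ≤ j
        · exact hvanish i j (by omega)
        · exact hsupp i j hcond
      · intro i j; simp
    | succ m IH =>
      intro f hsupp hcocycle hvanish
      push_cast at hvanish
      set a : ℤ := n - 3 - (m : ℤ) with ha
      set s : ℤ := (m : ℤ) + 1 with hs
      by_cases hB : 0 ≤ a + 1
      · -- kill the component at (a+1, s+1)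
        have h0 := hcocycle a (s + 1)
        rw [hvanish a (s + 1 + 1) (by omega)] at h0
        simp only [map_zero, zero_add] at h0
        obtain ⟨y, hy⟩ := hexact (a + 1) s hB (by omega) (f (a + 1) (s + 1)) h0
        set δ : ∀ i j, E i j := fun i j =>
          (if h : i = a + 1 ∧ j = s + 1 then trE h.1.symm h.2.symm (d'' (a + 1) s y) else 0)
          + (if h : i = a + 1 + 1 ∧ j = s then trE h.1.symm h.2.symm (d' (a + 1) s y) else 0)
          with hδ
        have hsupp' : ∀ i j, ¬(i + j = n ∧ 0 ≤ i ∧ 1 ≤ j) → f i j - δ i j = 0 := by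
          intro i j hc
          rw [hsupp i j hc]
          simp only [hδ]
          rw [dif_neg (show ¬(i = a + 1 ∧ j = s + 1) by
                rintro ⟨rfl, rfl⟩; exact hc ⟨by omega, by omega, by omega⟩),
              dif_neg (show ¬(i = a + 1 + 1 ∧ j = s) by
                rintro ⟨rfl, rfl⟩; exact hc ⟨by omega, by omega, by omega⟩)]
          simp
        have hDδ : ∀ i j, d' i (j + 1) (δ i (j + 1)) + d'' (i + 1) j (δ (i + 1) j) = 0 := by
          intro i j
          simp only [hδ]
          by_cases h1 : i = a + 1 ∧ j = s
          · obtain ⟨rfl, rfl⟩ := h1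
            rw [dif_pos ⟨rfl, rfl⟩, dif_neg (show ¬(a + 1 = a + 1 + 1 ∧ s + 1 = s) by omega),
              dif_neg (show ¬(a + 1 + 1 = a + 1 ∧ s = s + 1) by omega),
              dif_pos ⟨rfl, rfl⟩, trE_self, trE_self]
            simp only [map_add, map_zero, add_zero, zero_add]
            rw [hanti (a + 1) s y]
            abel
          · rw [dif_neg (show ¬(i = a + 1 ∧ j + 1 = s + 1) by omega),
                dif_neg (show ¬(i + 1 = a + 1 + 1 ∧ j = s) by omega)]
            by_cases h2 : i = a + 1 + 1 ∧ j + 1 = s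
            · rw [dif_pos h2]
              simp only [map_add, map_zero, add_zero, zero_add]
              rw [trE_d' d', hd'sq, trE_zero]
              by_cases h3 : i + 1 = a + 1 ∧ j = s + 1
              · rw [dif_pos h3]
                simp only [map_add, map_zero, add_zero, zero_add]
                rw [trE_d'' d'', hd''sq, trE_zero]
              · rw [dif_neg h3]; simp
            · rw [dif_neg h2]
              by_cases h3 : i + 1 = a + 1 ∧ j = s + 1
              · rw [dif_pos h3]
                simp only [map_add, map_zero, add_zero, zero_add]
                rw [trE_d'' d'', hd''sq, trE_zero]
              · rw [dif_neg h3]; simp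
        have hcocycle' : ∀ i j,
            d' i (j + 1) (f i (j + 1) - δ i (j + 1))
              + d'' (i + 1) j (f (i + 1) j - δ (i + 1) j) = 0 := by
          intro i j
          simp only [map_sub]
          rw [sub_add_sub_comm, hcocycle i j, hDδ i j, sub_zero]
        have hvanish' : ∀ i j, i < n - 1 - (m : ℤ) → f i j - δ i j = 0 := by
          intro i j hij
          by_cases hij2 : i = a + 1 ∧ j = s + 1
          · simp only [hδ]
            obtain ⟨rfl, rfl⟩ := hij2
            rw [dif_pos (show a + 1 = a + 1 ∧ s + 1 = s + 1 from ⟨rfl, rfl⟩),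
              dif_neg (show ¬(a + 1 = a + 1 + 1 ∧ s + 1 = s) by omega),
              trE_self, hy]
            simp
          · simp only [hδ]
            rw [dif_neg hij2, dif_neg (show ¬(i = a + 1 + 1 ∧ j = s) by omega)]
            by_cases hia : i < a + 1
            · rw [hvanish i j (by omega)]; simp
            · rw [hsupp i j (by rintro ⟨u1, u2, u3⟩; exact hij2 ⟨by omega, by omega⟩)]; simp
        obtain ⟨h, g', Hh1, Hh2, Hg1, Hg2⟩ :=
          IH (fun i j => f i j - δ i j) hsupp' hcocycle' hvanish'
        set γ : ∀ i j, E i j := fun i j =>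
          if h : i = a + 1 ∧ j = s then trE h.1.symm h.2.symm y else 0 with hγ
        refine ⟨h, fun i j => g' i j + γ i j, Hh1, Hh2, ?_, ?_⟩
        · intro i j hc
          simp only [hγ]
          rw [Hg1 i j hc, dif_neg (show ¬(i = a + 1 ∧ j = s) by
            rintro ⟨rfl, rfl⟩; exact hc ⟨by omega, by omega, by omega⟩)]
          simp
        · intro i j
          have key : δ (i + 1) (j + 1) =
              d' i (j + 1) (γ i (j + 1)) + d'' (i + 1) j (γ (i + 1) j) := by
            simp only [hδ, hγ]
            by_cases c1 : i = a + 1 ∧ j + 1 = s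
            · rw [dif_pos c1, dif_neg (show ¬(i + 1 = a + 1 ∧ j = s) by omega),
                dif_neg (show ¬(i + 1 = a + 1 ∧ j + 1 = s + 1) by omega),
                dif_pos (show i + 1 = a + 1 + 1 ∧ j + 1 = s from ⟨by omega, c1.2⟩),
                trE_d' d']
              simp only [map_zero, zero_add, add_zero]
            · by_cases c2 : i + 1 = a + 1 ∧ j = s
              · rw [dif_neg (show ¬(i = a + 1 ∧ j + 1 = s) from c1),
                  dif_pos c2,
                  dif_pos (show i + 1 = a + 1 ∧ j + 1 = s + 1 from ⟨c2.1, by omega⟩),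
                  dif_neg (show ¬(i + 1 = a + 1 + 1 ∧ j + 1 = s) by omega),
                  trE_d'' d'']
                simp only [map_zero, zero_add, add_zero]
              · rw [dif_neg c1, dif_neg c2,
                  dif_neg (show ¬(i + 1 = a + 1 ∧ j + 1 = s + 1) by omega),
                  dif_neg (show ¬(i + 1 = a + 1 + 1 ∧ j + 1 = s) by omega)]
                simp
          have hh := Hg2 i j
          show f (i + 1) (j + 1) - h (i + 1) (j + 1) =
            d' i (j + 1) (g' i (j + 1) + γ i (j + 1))
              + d'' (i + 1) j (g' (i + 1) j + γ (i + 1) j)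
          rw [map_add, map_add, add_add_add_comm, ← hh, ← key]
          abel
      · -- the column a+1 lies at negative i: f already vanishes there
        exact IH f hsupp hcocycle (fun i j hij => by
          by_cases hia : i < a + 1
          · exact hvanish i j (by omega)
          · exact hsupp i j (by rintro ⟨h1, h2, h3⟩; omega))
  exact aux n.toNat f hsupp hcocycle
    (fun i j hij => hsupp i j (by rintro ⟨h1, h2, h3⟩; omega))
end

section
/- In the staircase argument, a single step holds: if $f = \sum_{k \le i \le n-1} f_{i,n-i}$ is a total $n$-cocycle in a double complex with exact columns and $k < n$, and $g_{k,n-k-1}$ satisfies $d''(g_{k,n-k-1}) = f_{k,n-k}$, then $h = \sum_{k+1 \le i \le n-1} f_{i,n-i} - d'(g_{k,n-k-1})$ is a total $n$-cocycle with vanishing components in bidegrees $(i,n-i)$ for $i \le k$, and $f - h = (d' + d'')(g_{k,n-k-1})$ is a total coboundary. -/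
/-!
STATEMENT 14 (one step of the staircase argument): in a double cochain complex
`{E^{i,j}, d', d''}` (anticommuting differentials, total differential `D = d' + d''`),
suppose `f = Σ_{K ≤ i ≤ n-1} f_{i,n-i}` is a total `n`-cocycle (an `(n,K)`-cocycle,
`K < n`) and `g_{K,n-K-1}` satisfies `d''(g_{K,n-K-1}) = f_{K,n-K}`.  Then
`h = Σ_{K+1 ≤ i ≤ n-1} f_{i,n-i} - d'(g_{K,n-K-1})` is a total `n`-cocycle with
vanishing components in bidegrees `(i, n-i)` for `i ≤ K`, and
`f - h = (d' + d'')(g_{K,n-K-1})` is a total coboundary.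

We write `n = K + m + 1` (so `n - K = m + 1`, `n - K - 1 = m`); `h` is described by its
componentwise defining equations, and `f - h = D g` is expressed componentwise (the only
nonzero components of `D g` being `d'' g` in bidegree `(K, m+1)` and `d' g` in bidegree
`(K+1, m)`).
-/

theorem staircase_step
    (k : Type) [Field k]
    (E : ℤ → ℤ → Type) [∀ i j, AddCommGroup (E i j)] [∀ i j, Module k (E i j)]
    (d' : ∀ i j, E i j →ₗ[k] E (i + 1) j) (d'' : ∀ i j, E i j →ₗ[k] E i (j + 1))
    (hd'sq : ∀ i j (x : E i j), d' (i + 1) j (d' i j x) = 0)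
    (hd''sq : ∀ i j (x : E i j), d'' i (j + 1) (d'' i j x) = 0)
    (hanti : ∀ i j (x : E i j), d' i (j + 1) (d'' i j x) = - d'' (i + 1) j (d' i j x))
    (K m : ℤ)
    -- `f` is an `(n, K)`-cocycle, `n = K + m + 1`:
    (f : ∀ i j, E i j)
    (hsupp : ∀ i j, ¬(i + j = K + m + 1 ∧ K ≤ i ∧ 1 ≤ j) → f i j = 0)
    (hcocycle : ∀ i j, d' i (j + 1) (f i (j + 1)) + d'' (i + 1) j (f (i + 1) j) = 0)
    -- `g = g_{K, n-K-1}` with `d'' g = f_{K, n-K}`: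
    (g : E K m)
    (hg : d'' K m g = f K (m + 1))
    -- `h = Σ_{K+1 ≤ i ≤ n-1} f_{i,n-i} - d' g`, described componentwise:
    (h : ∀ i j, E i j)
    (h_top : h K (m + 1) = 0)
    (h_corr : h (K + 1) m = f (K + 1) m - d' K m g)
    (h_rest : ∀ i j, ¬((i = K ∧ j = m + 1) ∨ (i = K + 1 ∧ j = m)) → h i j = f i j) :
    -- `h` is a total `n`-cocycle:
    (∀ i j, d' i (j + 1) (h i (j + 1)) + d'' (i + 1) j (h (i + 1) j) = 0) ∧
    -- with vanishing components in bidegrees `(i, n-i)` for `i ≤ K`: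
    (∀ i j, i ≤ K → h i j = 0) ∧
    -- and `f - h = (d' + d'') g`:
    (f K (m + 1) - h K (m + 1) = d'' K m g) ∧
    (f (K + 1) m - h (K + 1) m = d' K m g) ∧
    (∀ i j, ¬((i = K ∧ j = m + 1) ∨ (i = K + 1 ∧ j = m)) → f i j - h i j = 0) := by

  refine ⟨?_, ?_, ?_, ?_, ?_⟩
  · intro i j
    by_cases h1 : i = K ∧ j = m
    · obtain ⟨rfl, rfl⟩ := h1
      rw [h_top, h_corr, map_zero, map_sub, zero_add]
      have e1 : d'' (i + 1) j (f (i + 1) j) = -(d' i (j + 1) (f i (j + 1))) :=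
        eq_neg_of_add_eq_zero_right (hcocycle i j)
      rw [e1, ← hg, hanti, neg_neg, sub_self]
    · by_cases h2 : i = K + 1 ∧ j + 1 = m
      · obtain ⟨rfl, hm⟩ := h2
        subst hm
        rw [h_corr, h_rest (K + 1 + 1) j (by omega), map_sub,
          hd'sq K (j + 1) g, sub_zero]
        exact hcocycle (K + 1) j
      · by_cases h3 : i + 1 = K ∧ j = m + 1
        · obtain ⟨hK, rfl⟩ := h3
          subst hK
          rw [h_top, map_zero, add_zero,
            h_rest i (m + 1 + 1) (by omega),
            hsupp i (m + 1 + 1) (by omega), map_zero]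
        · rw [h_rest i (j + 1) (by omega), h_rest (i + 1) j (by omega)]
          exact hcocycle i j
  · intro i j hij
    by_cases h1 : i = K ∧ j = m + 1
    · obtain ⟨rfl, rfl⟩ := h1; exact h_top
    · rw [h_rest i j (by omega)]
      exact hsupp i j (by omega)
  · rw [h_top, sub_zero, hg]
  · rw [h_corr]; abel
  · intro i j hij; rw [h_rest i j hij, sub_self]
end
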